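/- SSD is preserved under mixtures of quantile couplings: let m, m' : [0,1] → ℝ be integrable, U ~ U[0,1], and suppose m(U) ⪰_SSD Δ and m'(U) ⪰_SSD Δ with E[m(U)] = E[m'(U)] = E[Δ] for an integrable Δ. Then for every α ∈ [0,1], αm(U) + (1−α)m'(U) as a function-valued mixture satisfies (αm + (1−α)m')(U) ⪰_SSD Δ. -/

import Mathlib

/-!
Write `S_μ(c) = E_μ[(c - X)⁺]` for the expected shortfall below `c`. Through the quantile
transform (`Q_μ(U)` has law `μ` for `U` uniform on `[0,1]`), `S_μ(c) = ∫₀¹ (c - Q_μ)⁺`, so the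
integrated quantile function `I_μ` and `S_μ` are Legendre conjugates: `q c ≤ I_μ(q) + S_μ(c)`
for `q ∈ [0,1]`, with equality when `c = Q_μ(q)` or `q = F_μ(c)`. Hence `I_ν ≤ I_μ` on `[0,1]`
iff `S_μ ≤ S_ν` everywhere, and the shortfall order is preserved by pointwise mixtures because
`x ↦ (c - x)⁺` is convex.
-/

open MeasureTheory ProbabilityTheory Set

/-- Quantile function of a measure on ℝ. -/
noncomputable def quantileFn (μ : Measure ℝ) (q : ℝ) : ℝ :=
  sInf {x : ℝ | q ≤ (μ (Set.Iic x)).toReal}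

/-- Integrated quantile function. -/
noncomputable def iqf (μ : Measure ℝ) (q : ℝ) : ℝ :=
  ∫ s in (0:ℝ)..q, quantileFn μ s

/-- The uniform distribution on `[0,1]`. -/
noncomputable def unif01 : Measure ℝ := volume.restrict (Set.Icc (0:ℝ) 1)

open Filter

instance : IsProbabilityMeasure unif01 :=
  ⟨by rw [unif01, Measure.restrict_apply_univ, Real.volume_Icc]; norm_num⟩

lemma unif01_eq_restrict_Ioo : unif01 = volume.restrict (Ioo 0 1) :=
  (Measure.restrict_congr_set Ioo_ae_eq_Icc).symm

lemma unif01_Iic {a : ℝ} (ha : a ∈ Icc (0:ℝ) 1) : unif01 (Iic a) = ENNReal.ofReal a := by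
  rw [unif01, Measure.restrict_apply measurableSet_Iic,
    show Iic a ∩ Icc 0 1 = Icc 0 a from by
      ext s; simp only [mem_inter_iff, mem_Iic, mem_Icc]
      exact ⟨fun h => ⟨h.2.1, h.1⟩, fun h => ⟨h.2, h.1, h.2.trans ha.2⟩⟩,
    Real.volume_Icc, sub_zero]

section Quantile

variable {μ : Measure ℝ}

lemma bddBelow_le_cdf {s : ℝ} (hs : 0 < s) : BddBelow {x | s ≤ cdf μ x} := by
  obtain ⟨t₀, ht₀⟩ := ((tendsto_cdf_atBot μ).eventually (eventually_lt_nhds hs)).exists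
  exact ⟨t₀, fun x hx => le_of_not_gt fun hxt =>
    (hx.trans (monotone_cdf μ hxt.le)).not_gt ht₀⟩

variable [IsProbabilityMeasure μ]

lemma quantileFn_eq_sInf (s : ℝ) : quantileFn μ s = sInf {x | s ≤ cdf μ x} := by
  simp only [quantileFn, cdf_eq_real, measureReal_def]

lemma quantileFn_le_of_le_cdf {s t : ℝ} (hs : 0 < s) (h : s ≤ cdf μ t) :
    quantileFn μ s ≤ t := by
  rw [quantileFn_eq_sInf]
  exact csInf_le (bddBelow_le_cdf hs) h

lemma le_cdf_of_quantileFn_le {s t : ℝ} (hs1 : s < 1) (h : quantileFn μ s ≤ t) :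
    s ≤ cdf μ t := by
  rcases le_or_gt s 0 with hs | hs
  · exact hs.trans (cdf_nonneg μ t)
  have hne : {x | s ≤ cdf μ x}.Nonempty :=
    ((tendsto_cdf_atTop μ).eventually (eventually_ge_nhds hs1)).exists
  rw [quantileFn_eq_sInf] at h
  -- the infimum itself lies in the set, by right-continuity of the cdf
  have hmem : s ≤ cdf μ (sInf {x | s ≤ cdf μ x}) := by
    refine ge_of_tendsto (((cdf μ).right_continuous _).mono Ioi_subset_Ici_self) ?_
    filter_upwards [self_mem_nhdsWithin] with x hx
    obtain ⟨y, hy, hyx⟩ := (csInf_lt_iff (bddBelow_le_cdf hs) hne).1 hx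
    exact hy.trans (monotone_cdf μ hyx.le)
  exact hmem.trans (monotone_cdf μ h)

lemma monotoneOn_quantileFn : MonotoneOn (quantileFn μ) (Ioo 0 1) :=
  fun _ hs _ hs' hss => quantileFn_le_of_le_cdf hs.1
    (hss.trans (le_cdf_of_quantileFn_le hs'.2 le_rfl))

lemma aemeasurable_quantileFn : AEMeasurable (quantileFn μ) unif01 := by
  rw [unif01_eq_restrict_Ioo]
  exact aemeasurable_restrict_of_monotoneOn measurableSet_Ioo monotoneOn_quantileFn

lemma map_quantileFn_unif01 : unif01.map (quantileFn μ) = μ := by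
  have : IsProbabilityMeasure (unif01.map (quantileFn μ)) :=
    Measure.isProbabilityMeasure_map aemeasurable_quantileFn
  refine Measure.ext_of_Iic _ _ fun t => ?_
  have hmem : ∀ᵐ s ∂unif01, s ∈ Ioo (0:ℝ) 1 := by
    rw [unif01_eq_restrict_Ioo]; exact ae_restrict_mem measurableSet_Ioo
  have hpre : quantileFn μ ⁻¹' Iic t =ᵐ[unif01] Iic (cdf μ t) := by
    filter_upwards [hmem] with s hs
    exact propext ⟨le_cdf_of_quantileFn_le hs.2, quantileFn_le_of_le_cdf hs.1⟩
  rw [Measure.map_apply_of_aemeasurable aemeasurable_quantileFn measurableSet_Iic,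
    measure_congr hpre, unif01_Iic ⟨cdf_nonneg μ t, cdf_le_one μ t⟩, ofReal_cdf]

lemma integrableOn_quantileFn (hμ : Integrable id μ) :
    IntegrableOn (quantileFn μ) (Icc 0 1) := by
  rw [← map_quantileFn_unif01 (μ := μ),
    integrable_map_measure aestronglyMeasurable_id aemeasurable_quantileFn] at hμ
  exact hμ

lemma intervalIntegrable_quantileFn (hμ : Integrable id μ) {a b : ℝ} (ha : a ∈ Icc (0:ℝ) 1)
    (hb : b ∈ Icc (0:ℝ) 1) : IntervalIntegrable (quantileFn μ) volume a b :=
  ((integrableOn_quantileFn hμ).mono_set (uIcc_subset_Icc ha hb)).intervalIntegrable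

lemma continuousOn_iqf (hμ : Integrable id μ) : ContinuousOn (iqf μ) (Icc 0 1) := by
  rw [← uIcc_of_le zero_le_one]
  exact intervalIntegral.continuousOn_primitive_interval
    (by rw [uIcc_of_le zero_le_one]; exact integrableOn_quantileFn hμ)

end Quantile

noncomputable def shortfall (μ : Measure ℝ) (c : ℝ) : ℝ := ∫ x, max (c - x) 0 ∂μ

lemma shortfall_map {Ω : Type*} [MeasurableSpace Ω] {P : Measure Ω} {X : Ω → ℝ}
    (hX : AEMeasurable X P) (c : ℝ) :
    shortfall (P.map X) c = ∫ ω, max (c - X ω) 0 ∂P :=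
  integral_map hX (by fun_prop)

lemma shortfall_map_convexComb_le {Ω : Type*} [MeasurableSpace Ω] {P : Measure Ω}
    [IsFiniteMeasure P] {X Y : Ω → ℝ} (hX : Integrable X P) (hY : Integrable Y P)
    {α : ℝ} (hα : α ∈ Icc (0:ℝ) 1) (c : ℝ) :
    shortfall (P.map fun ω => α * X ω + (1 - α) * Y ω) c
      ≤ α * shortfall (P.map X) c + (1 - α) * shortfall (P.map Y) c := by
  have hα' : 0 ≤ 1 - α := sub_nonneg.2 hα.2
  rw [shortfall_map (by fun_prop), shortfall_map hX.aemeasurable,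
    shortfall_map hY.aemeasurable, ← integral_const_mul, ← integral_const_mul,
    ← integral_add (by fun_prop) (by fun_prop)]
  refine integral_mono (by fun_prop) (by fun_prop) fun ω => max_le ?_
    (add_nonneg (mul_nonneg hα.1 (le_max_right _ _)) (mul_nonneg hα' (le_max_right _ _)))
  nlinarith [mul_le_mul_of_nonneg_left (le_max_left (c - X ω) 0) hα.1,
    mul_le_mul_of_nonneg_left (le_max_left (c - Y ω) 0) hα']

section Duality

variable {μ : Measure ℝ} [IsProbabilityMeasure μ]

lemma shortfall_eq_intervalIntegral (c : ℝ) :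
    shortfall μ c = ∫ s in (0:ℝ)..1, max (c - quantileFn μ s) 0 := by
  conv_lhs => rw [← map_quantileFn_unif01 (μ := μ)]
  rw [shortfall_map aemeasurable_quantileFn, intervalIntegral.integral_of_le zero_le_one,
    ← integral_Icc_eq_integral_Ioc, unif01]

lemma integral_sub_quantileFn (hμ : Integrable id μ) {q : ℝ} (hq : q ∈ Icc (0:ℝ) 1)
    (c : ℝ) : ∫ s in (0:ℝ)..q, (c - quantileFn μ s) = q * c - iqf μ q := by
  rw [intervalIntegral.integral_sub intervalIntegrable_const
      (intervalIntegrable_quantileFn hμ (left_mem_Icc.2 zero_le_one) hq),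
    intervalIntegral.integral_const, iqf, sub_zero, smul_eq_mul]

lemma intervalIntegrable_max_sub_quantileFn (hμ : Integrable id μ) {a b : ℝ}
    (ha : a ∈ Icc (0:ℝ) 1) (hb : b ∈ Icc (0:ℝ) 1) (c : ℝ) :
    IntervalIntegrable (fun s => max (c - quantileFn μ s) 0) volume a b := by
  have h : IntegrableOn (fun s => max (c - quantileFn μ s) 0) (Icc 0 1) :=
    ((integrableOn_const (by simp)).sub (integrableOn_quantileFn hμ)).pos_part
  exact (h.mono_set (uIcc_subset_Icc ha hb)).intervalIntegrable

lemma mul_le_iqf_add_shortfall (hμ : Integrable id μ) {q : ℝ} (hq : q ∈ Icc (0:ℝ) 1)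
    (c : ℝ) : q * c ≤ iqf μ q + shortfall μ c := by
  have hlo : ∫ s in (0:ℝ)..q, (c - quantileFn μ s)
      ≤ ∫ s in (0:ℝ)..q, max (c - quantileFn μ s) 0 :=
    intervalIntegral.integral_mono_on hq.1
      (intervalIntegrable_const.sub
        (intervalIntegrable_quantileFn hμ (left_mem_Icc.2 zero_le_one) hq))
      (intervalIntegrable_max_sub_quantileFn hμ (left_mem_Icc.2 zero_le_one) hq c)
      fun s _ => le_max_left _ _
  have hmono : ∫ s in (0:ℝ)..q, max (c - quantileFn μ s) 0 ≤ shortfall μ c := by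
    rw [shortfall_eq_intervalIntegral]
    exact intervalIntegral.integral_mono_interval le_rfl hq.1 hq.2
      (ae_of_all _ fun _ => le_max_right _ _)
      (intervalIntegrable_max_sub_quantileFn hμ (left_mem_Icc.2 zero_le_one)
        (right_mem_Icc.2 zero_le_one) c)
  linarith [integral_sub_quantileFn hμ hq c]

lemma iqf_add_shortfall_eq (hμ : Integrable id μ) {q c : ℝ} (hq : q ∈ Icc (0:ℝ) 1)
    (hlo : ∀ s ∈ Ioc 0 q, quantileFn μ s ≤ c) (hhi : ∀ s ∈ Ioo q 1, c ≤ quantileFn μ s) :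
    iqf μ q + shortfall μ c = q * c := by
  have h0 : (0:ℝ) ∈ Icc (0:ℝ) 1 := left_mem_Icc.2 zero_le_one
  have h1 : (1:ℝ) ∈ Icc (0:ℝ) 1 := right_mem_Icc.2 zero_le_one
  have hleft : ∫ s in (0:ℝ)..q, max (c - quantileFn μ s) 0
      = ∫ s in (0:ℝ)..q, (c - quantileFn μ s) := by
    rw [intervalIntegral.integral_of_le hq.1, intervalIntegral.integral_of_le hq.1]
    exact setIntegral_congr_fun measurableSet_Ioc fun s hs =>
      max_eq_left (sub_nonneg.2 (hlo s hs))
  have hright : ∫ s in q..1, max (c - quantileFn μ s) 0 = 0 := by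
    rw [intervalIntegral.integral_of_le hq.2, integral_Ioc_eq_integral_Ioo]
    exact setIntegral_eq_zero_of_forall_eq_zero fun s hs =>
      max_eq_right (sub_nonpos.2 (hhi s hs))
  rw [shortfall_eq_intervalIntegral, ← intervalIntegral.integral_add_adjacent_intervals
    (intervalIntegrable_max_sub_quantileFn hμ h0 hq c)
    (intervalIntegrable_max_sub_quantileFn hμ hq h1 c), hleft, hright,
    integral_sub_quantileFn hμ hq c]
  ring

lemma iqf_add_shortfall_quantileFn (hμ : Integrable id μ) {q : ℝ} (hq : q ∈ Ioo (0:ℝ) 1) :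
    iqf μ q + shortfall μ (quantileFn μ q) = q * quantileFn μ q :=
  iqf_add_shortfall_eq hμ (Ioo_subset_Icc_self hq)
    (fun _ hs => monotoneOn_quantileFn ⟨hs.1, hs.2.trans_lt hq.2⟩ hq hs.2)
    (fun _ hs => monotoneOn_quantileFn hq ⟨hq.1.trans hs.1, hs.2⟩ hs.1.le)

lemma iqf_cdf_add_shortfall (hμ : Integrable id μ) (c : ℝ) :
    iqf μ (cdf μ c) + shortfall μ c = cdf μ c * c :=
  iqf_add_shortfall_eq hμ ⟨cdf_nonneg μ c, cdf_le_one μ c⟩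
    (fun _ hs => quantileFn_le_of_le_cdf hs.1 hs.2)
    (fun _ hs => le_of_not_ge fun h => (le_cdf_of_quantileFn_le hs.2 h).not_gt hs.1)

end Duality

section Order

variable {μ ν : Measure ℝ} [IsProbabilityMeasure μ] [IsProbabilityMeasure ν]

lemma shortfall_le_of_iqf_le (hμ : Integrable id μ) (hν : Integrable id ν)
    (h : ∀ q ∈ Icc (0:ℝ) 1, iqf ν q ≤ iqf μ q) (c : ℝ) : shortfall μ c ≤ shortfall ν c := by
  have hF : cdf μ c ∈ Icc (0:ℝ) 1 := ⟨cdf_nonneg μ c, cdf_le_one μ c⟩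
  linarith [iqf_cdf_add_shortfall hμ c, mul_le_iqf_add_shortfall hν hF c, h _ hF]

lemma iqf_le_of_shortfall_le (hμ : Integrable id μ) (hν : Integrable id ν)
    (h : ∀ c, shortfall μ c ≤ shortfall ν c) : ∀ q ∈ Icc (0:ℝ) 1, iqf ν q ≤ iqf μ q := by
  have hopen : ∀ q ∈ Ioo (0:ℝ) 1, iqf ν q ≤ iqf μ q := fun q hq => by
    linarith [iqf_add_shortfall_quantileFn hν hq,
      mul_le_iqf_add_shortfall hμ (Ioo_subset_Icc_self hq) (quantileFn ν q), h (quantileFn ν q)]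
  have hcl : closure (Ioo (0:ℝ) 1) = Icc 0 1 := closure_Ioo zero_ne_one
  exact fun q hq => le_on_closure hopen (hcl ▸ continuousOn_iqf hν) (hcl ▸ continuousOn_iqf hμ)
    (hcl ▸ hq)

end Order

lemma integrable_id_map {Ω : Type*} [MeasurableSpace Ω] {P : Measure Ω} {X : Ω → ℝ}
    (hX : Integrable X P) : Integrable id (P.map X) :=
  (integrable_map_measure aestronglyMeasurable_id hX.aemeasurable).2 hX

theorem stmt_12_general (m m' : ℝ → ℝ)
    (hmi : IntegrableOn m (Set.Icc (0:ℝ) 1)) (hmi' : IntegrableOn m' (Set.Icc (0:ℝ) 1))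
    (ν : Measure ℝ) [IsProbabilityMeasure ν] (hν : Integrable (fun x : ℝ => x) ν)
    (hssd : ∀ q ∈ Set.Icc (0:ℝ) 1, iqf ν q ≤ iqf (Measure.map m unif01) q)
    (hssd' : ∀ q ∈ Set.Icc (0:ℝ) 1, iqf ν q ≤ iqf (Measure.map m' unif01) q) :
    ∀ α : ℝ, α ∈ Set.Icc (0:ℝ) 1 →
      ∀ q ∈ Set.Icc (0:ℝ) 1,
        iqf ν q ≤ iqf (Measure.map (fun u => α * m u + (1 - α) * m' u) unif01) q := by
  intro α hα
  have hm : Integrable m unif01 := hmi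
  have hm' : Integrable m' unif01 := hmi'
  have hmix : Integrable (fun u => α * m u + (1 - α) * m' u) unif01 := by fun_prop
  have := Measure.isProbabilityMeasure_map (μ := unif01) hm.aemeasurable
  have := Measure.isProbabilityMeasure_map (μ := unif01) hm'.aemeasurable
  have := Measure.isProbabilityMeasure_map (μ := unif01) hmix.aemeasurable
  refine iqf_le_of_shortfall_le (integrable_id_map hmix) hν fun c => ?_
  calc shortfall (unif01.map fun u => α * m u + (1 - α) * m' u) c
      ≤ α * shortfall (unif01.map m) c + (1 - α) * shortfall (unif01.map m') c :=
        shortfall_map_convexComb_le hm hm' hα c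
    _ ≤ α * shortfall ν c + (1 - α) * shortfall ν c :=
        add_le_add
          (mul_le_mul_of_nonneg_left (shortfall_le_of_iqf_le (integrable_id_map hm) hν hssd c)
            hα.1)
          (mul_le_mul_of_nonneg_left (shortfall_le_of_iqf_le (integrable_id_map hm') hν hssd' c)
            (sub_nonneg.2 hα.2))
    _ = shortfall ν c := by ring

/-- SSD preserved under pointwise mixtures: if `m(U) ⪰_SSD Δ` and
`m'(U) ⪰_SSD Δ` with `E[m(U)] = E[m'(U)] = E[Δ]` for `U ∼ U[0,1]`, then for every
`α ∈ [0,1]` the pointwise convex combination satisfies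
`(αm + (1−α)m')(U) ⪰_SSD Δ`. -/
theorem stmt_12 (m m' : ℝ → ℝ) (hm : Measurable m) (hm' : Measurable m')
    (hmi : IntegrableOn m (Set.Icc (0:ℝ) 1)) (hmi' : IntegrableOn m' (Set.Icc (0:ℝ) 1))
    (ν : Measure ℝ) [IsProbabilityMeasure ν] (hν : Integrable (fun x : ℝ => x) ν)
    (hmean : ∫ u in Set.Icc (0:ℝ) 1, m u = ∫ x, x ∂ν)
    (hmean' : ∫ u in Set.Icc (0:ℝ) 1, m' u = ∫ x, x ∂ν)
    (hssd : ∀ q ∈ Set.Icc (0:ℝ) 1, iqf ν q ≤ iqf (Measure.map m unif01) q)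
    (hssd' : ∀ q ∈ Set.Icc (0:ℝ) 1, iqf ν q ≤ iqf (Measure.map m' unif01) q) :
    ∀ α : ℝ, α ∈ Set.Icc (0:ℝ) 1 →
      ∀ q ∈ Set.Icc (0:ℝ) 1,
        iqf ν q ≤ iqf (Measure.map (fun u => α * m u + (1 - α) * m' u) unif01) q :=
  stmt_12_general m m' hmi hmi' ν hν hssd hssd'
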